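/- arXiv:1701.05180 — 3 statements merged into one kernel-verified Lean document; each statement's English description precedes it below -/
import Mathlib

section
/- Under the pseudo-bosonic setup with [a,b]f = f on D, a φ₀ = 0, b† Ψ₀ = 0, and defining φₙ = (1/√n!) bⁿ φ₀ and Ψₙ = (1/√n!) (a†)ⁿ Ψ₀, the vectors φₙ and Ψₙ are eigenvectors of N = ba and N† = a†b† respectively: N φₙ = n φₙ and N† Ψₙ = n Ψₙ for all n ≥ 0. -/
/-!
If `[A, B] = 1` on a `B`-stable set containing a vector `x` with `A x = 0`, induction on `n`
gives `A (Bⁿ⁺¹ x) = (n + 1) Bⁿ x`, hence `B A (Bⁿ x) = n Bⁿ x`. This applies to `a, b, φ₀` directly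
and, since taking formal adjoints on a dense domain turns `[a, b] = 1` into `[b†, a†] = 1`, to
`b†, a†, Ψ₀` as well. The normalisation `1/√n!` is a scalar and commutes with everything.
-/

open scoped ComplexConjugate

local notation "⟪" x ", " y "⟫" => @inner ℂ _ _ x y

namespace Module.End

variable {R M : Type*} [Semiring R] [AddCommGroup M] [Module R M]
  {A B : Module.End R M} {S : Set M}

theorem apply_pow_succ_apply_of_commutator_eq_self (hB : Set.MapsTo B S S)
    (hcomm : ∀ f ∈ S, A (B f) - B (A f) = f) {x : M} (hx : x ∈ S) (hAx : A x = 0) (n : ℕ) :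
    A ((B ^ (n + 1)) x) = (n + 1) • (B ^ n) x := by
  induction n with
  | zero => simpa [hAx] using hcomm x hx
  | succ n ih =>
    have hmem : (B ^ (n + 1)) x ∈ S := by
      rw [pow_apply]
      exact hB.iterate (n + 1) hx
    rw [pow_succ' B (n + 1), mul_apply, sub_eq_iff_eq_add.mp (hcomm _ hmem), ih, map_nsmul,
      ← mul_apply, ← pow_succ', succ_nsmul' _ (n + 1)]

theorem apply_apply_pow_apply_of_commutator_eq_self (hB : Set.MapsTo B S S)
    (hcomm : ∀ f ∈ S, A (B f) - B (A f) = f) {x : M} (hx : x ∈ S) (hAx : A x = 0) (n : ℕ) :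
    B (A ((B ^ n) x)) = n • (B ^ n) x := by
  cases n with
  | zero => simp [hAx]
  | succ n =>
    rw [apply_pow_succ_apply_of_commutator_eq_self hB hcomm hx hAx, map_nsmul, ← mul_apply,
      ← pow_succ']

end Module.End

theorem commutator_eq_self_of_formal_adjoint {𝕜 H : Type*} [RCLike 𝕜] [NormedAddCommGroup H]
    [InnerProductSpace 𝕜 H] {S : Set H} (hS : Dense S) {a b a' b' : H →ₗ[𝕜] H}
    (ha : Set.MapsTo a S S) (hb : Set.MapsTo b S S)
    (ha' : Set.MapsTo a' S S) (hb' : Set.MapsTo b' S S)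
    (hadj_a : ∀ f ∈ S, ∀ g ∈ S, inner 𝕜 (a' f) g = inner 𝕜 f (a g))
    (hadj_b : ∀ f ∈ S, ∀ g ∈ S, inner 𝕜 (b' f) g = inner 𝕜 f (b g))
    (hcomm : ∀ f ∈ S, a (b f) - b (a f) = f) {f : H} (hf : f ∈ S) :
    b' (a' f) - a' (b' f) = f := by
  refine hS.eq_of_inner_left 𝕜 fun g hg => ?_
  rw [inner_sub_left, hadj_b _ (ha' hf) g hg, hadj_a _ hf _ (hb hg), hadj_a _ (hb' hf) g hg,
    hadj_b _ hf _ (ha hg), ← inner_sub_right, hcomm g hg]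

theorem stmt1_general {H : Type*} [NormedAddCommGroup H] [InnerProductSpace ℂ H]
    (D : Submodule ℂ H) (hD : Dense (D : Set H))
    (a b a' b' : H →ₗ[ℂ] H)
    (ha : ∀ f ∈ D, a f ∈ D) (hb : ∀ f ∈ D, b f ∈ D)
    (ha' : ∀ f ∈ D, a' f ∈ D) (hb' : ∀ f ∈ D, b' f ∈ D)
    (hadj_a : ∀ f ∈ D, ∀ g ∈ D, ⟪a' f, g⟫ = ⟪f, a g⟫)
    (hadj_b : ∀ f ∈ D, ∀ g ∈ D, ⟪b' f, g⟫ = ⟪f, b g⟫)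
    (hcomm : ∀ f ∈ D, a (b f) - b (a f) = f)
    (φ₀ Ψ₀ : H) (hφ₀D : φ₀ ∈ D) (hΨ₀D : Ψ₀ ∈ D)
    (haφ₀ : a φ₀ = 0) (hb'Ψ₀ : b' Ψ₀ = 0)
    (φ Ψ : ℕ → H)
    (hφ : ∀ n, φ n = ((Real.sqrt n.factorial : ℝ) : ℂ)⁻¹ • (b ^ n) φ₀)
    (hΨ : ∀ n, Ψ n = ((Real.sqrt n.factorial : ℝ) : ℂ)⁻¹ • (a' ^ n) Ψ₀) :
    (∀ n : ℕ, b (a (φ n)) = (n : ℂ) • φ n) ∧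
    (∀ n : ℕ, a' (b' (Ψ n)) = (n : ℂ) • Ψ n) := by
  have hcomm' : ∀ f ∈ D, b' (a' f) - a' (b' f) = f := fun f hf =>
    commutator_eq_self_of_formal_adjoint hD ha hb ha' hb' hadj_a hadj_b hcomm hf
  constructor
  · intro n
    rw [hφ n, map_smul, map_smul,
      Module.End.apply_apply_pow_apply_of_commutator_eq_self hb hcomm hφ₀D haφ₀,
      ← Nat.cast_smul_eq_nsmul ℂ, smul_comm]
  · intro n
    rw [hΨ n, map_smul, map_smul,
      Module.End.apply_apply_pow_apply_of_commutator_eq_self ha' hcomm' hΨ₀D hb'Ψ₀,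
      ← Nat.cast_smul_eq_nsmul ℂ, smul_comm]

theorem stmt1 {H : Type*} [NormedAddCommGroup H] [InnerProductSpace ℂ H] [CompleteSpace H]
    (D : Submodule ℂ H) (hD : Dense (D : Set H))
    (a b a' b' : H →ₗ[ℂ] H)
    (ha : ∀ f ∈ D, a f ∈ D) (hb : ∀ f ∈ D, b f ∈ D)
    (ha' : ∀ f ∈ D, a' f ∈ D) (hb' : ∀ f ∈ D, b' f ∈ D)
    (hadj_a : ∀ f ∈ D, ∀ g ∈ D, ⟪a' f, g⟫ = ⟪f, a g⟫)
    (hadj_b : ∀ f ∈ D, ∀ g ∈ D, ⟪b' f, g⟫ = ⟪f, b g⟫)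
    (hcomm : ∀ f ∈ D, a (b f) - b (a f) = f)
    (φ₀ Ψ₀ : H) (hφ₀D : φ₀ ∈ D) (hΨ₀D : Ψ₀ ∈ D) (hφ₀ : φ₀ ≠ 0) (hΨ₀ : Ψ₀ ≠ 0)
    (haφ₀ : a φ₀ = 0) (hb'Ψ₀ : b' Ψ₀ = 0)
    (φ Ψ : ℕ → H)
    (hφ : ∀ n, φ n = ((Real.sqrt n.factorial : ℝ) : ℂ)⁻¹ • (b ^ n) φ₀)
    (hΨ : ∀ n, Ψ n = ((Real.sqrt n.factorial : ℝ) : ℂ)⁻¹ • (a' ^ n) Ψ₀) :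
    (∀ n : ℕ, b (a (φ n)) = (n : ℂ) • φ n) ∧
    (∀ n : ℕ, a' (b' (Ψ n)) = (n : ℂ) • Ψ n) :=
  stmt1_general D hD a b a' b' ha hb ha' hb' hadj_a hadj_b hcomm φ₀ Ψ₀ hφ₀D hΨ₀D haφ₀ hb'Ψ₀ φ Ψ hφ
    hΨ
end

section
/- Under the pseudo-bosonic setup, if ⟨φ₀, Ψ₀⟩ = 1 then the families {φₙ} and {Ψₙ} are biorthogonal: ⟨φₙ, Ψₘ⟩ = δₙₘ for all n, m ≥ 0. -/
open scoped ComplexConjugate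

local notation "⟪" x ", " y "⟫" => @inner ℂ _ _ x y

theorem stmt2 {H : Type*} [NormedAddCommGroup H] [InnerProductSpace ℂ H] [CompleteSpace H]
    (D : Submodule ℂ H) (hD : Dense (D : Set H))
    (a b a' b' : H →ₗ[ℂ] H)
    (ha : ∀ f ∈ D, a f ∈ D) (hb : ∀ f ∈ D, b f ∈ D)
    (ha' : ∀ f ∈ D, a' f ∈ D) (hb' : ∀ f ∈ D, b' f ∈ D)
    (hadj_a : ∀ f ∈ D, ∀ g ∈ D, ⟪a' f, g⟫ = ⟪f, a g⟫)
    (hadj_b : ∀ f ∈ D, ∀ g ∈ D, ⟪b' f, g⟫ = ⟪f, b g⟫)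
    (hcomm : ∀ f ∈ D, a (b f) - b (a f) = f)
    (φ₀ Ψ₀ : H) (hφ₀D : φ₀ ∈ D) (hΨ₀D : Ψ₀ ∈ D) (hφ₀ : φ₀ ≠ 0) (hΨ₀ : Ψ₀ ≠ 0)
    (haφ₀ : a φ₀ = 0) (hb'Ψ₀ : b' Ψ₀ = 0) (hnorm : ⟪φ₀, Ψ₀⟫ = 1)
    (φ Ψ : ℕ → H)
    (hφ : ∀ n, φ n = ((Real.sqrt n.factorial : ℝ) : ℂ)⁻¹ • (b ^ n) φ₀)
    (hΨ : ∀ n, Ψ n = ((Real.sqrt n.factorial : ℝ) : ℂ)⁻¹ • (a' ^ n) Ψ₀) :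
    ∀ n m : ℕ, ⟪φ n, Ψ m⟫ = if n = m then (1 : ℂ) else 0 := by
  -- b^n φ₀ ∈ D
  have hsucc : ∀ (c : H →ₗ[ℂ] H) (n : ℕ) (x : H), (c ^ (n+1)) x = c ((c ^ n) x) := by
    intro c n x
    rw [pow_succ']
    rfl
  have hsucc' : ∀ (c : H →ₗ[ℂ] H) (n : ℕ) (x : H), (c ^ (n+1)) x = (c ^ n) (c x) := by
    intro c n x
    rw [pow_succ]
    rfl
  have hbnD : ∀ n, (b ^ n) φ₀ ∈ D := by
    intro n
    induction n with
    | zero => simpa using hφ₀D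
    | succ n ih => rw [hsucc]; exact hb _ ih
  have hanD : ∀ n, (a' ^ n) Ψ₀ ∈ D := by
    intro n
    induction n with
    | zero => simpa using hΨ₀D
    | succ n ih => rw [hsucc]; exact ha' _ ih
  -- a lowers powers of b applied to φ₀
  have hab : ∀ n : ℕ, a ((b ^ (n+1)) φ₀) = ((n : ℂ) + 1) • (b ^ n) φ₀ := by
    intro n
    induction n with
    | zero =>
      have h := hcomm φ₀ hφ₀D
      rw [haφ₀, map_zero, sub_zero] at h
      simp [hsucc, h]
    | succ n ih =>
      have h := hcomm _ (hbnD (n+1))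
      have h' : a (b ((b ^ (n+1)) φ₀)) = (b ^ (n+1)) φ₀ + b (a ((b ^ (n+1)) φ₀)) :=
        sub_eq_iff_eq_add.mp h
      rw [hsucc b (n+1), h', ih, map_smul, ← hsucc]
      push_cast
      module
  -- key inner product computation
  have key : ∀ m n : ℕ, ⟪Ψ₀, (a ^ m) ((b ^ n) φ₀)⟫ =
      if n = m then (n.factorial : ℂ) else 0 := by
    intro m
    induction m with
    | zero =>
      intro n
      match n with
      | 0 =>
        simp only [pow_zero, Module.End.one_apply, Nat.factorial_zero, if_pos rfl]
        rw [← inner_conj_symm, hnorm]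
        simp
      | (k+1) =>
        simp only [pow_zero, Module.End.one_apply, if_neg (Nat.succ_ne_zero k)]
        rw [hsucc, ← hadj_b Ψ₀ hΨ₀D _ (hbnD k), hb'Ψ₀, inner_zero_left]
    | succ m ih =>
      intro n
      match n with
      | 0 =>
        rw [hsucc' a m]
        simp only [pow_zero, Module.End.one_apply, haφ₀, map_zero, inner_zero_right]
        rw [if_neg (by omega)]
      | (k+1) =>
        rw [hsucc' a m, hab k, map_smul, inner_smul_right, ih k]
        by_cases hk : k = m
        · subst hk
          rw [if_pos rfl, if_pos rfl]
          push_cast [Nat.factorial_succ]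
          ring
        · rw [if_neg hk, if_neg (by omega), mul_zero]
  -- pull adjoints over
  have hadjpow : ∀ m : ℕ, ∀ g ∈ D, ⟪(a' ^ m) Ψ₀, g⟫ = ⟪Ψ₀, (a ^ m) g⟫ := by
    intro m
    induction m with
    | zero => intro g hg; simp
    | succ m ih =>
      intro g hg
      rw [hsucc a' m, hadj_a _ (hanD m) g hg, ih _ (ha g hg), hsucc' a m]
  intro n m
  rw [hφ, hΨ, inner_smul_left, inner_smul_right, ← inner_conj_symm,
    hadjpow m _ (hbnD n), key m n]
  by_cases h : n = m
  · subst h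
    rw [if_pos rfl, if_pos rfl]
    have h1 : (Real.sqrt n.factorial : ℂ) ≠ 0 := by
      simp [Real.sqrt_eq_zero', Nat.factorial_pos n, not_le.mpr]
      positivity
    have h2 : (Real.sqrt n.factorial : ℂ) * (Real.sqrt n.factorial : ℂ) = (n.factorial : ℂ) := by
      rw [← Complex.ofReal_mul, Real.mul_self_sqrt (by positivity)]
      push_cast; ring
    rw [map_inv₀, Complex.conj_ofReal, map_natCast]
    rw [← h2]
    field_simp
  · rw [if_neg h, if_neg h]
    simp
end

section
/- Let α > 0 with α² = 2πL for an integer L ≥ 2. Then the family of functions e_{n₁,n₂}(k,q) = e^{iα(q n₂ - k n₁)}, (n₁, n₂) ∈ ℤ², is NOT complete in L²([0,α)²): there exists a nonzero f ∈ L²([0,α)²) orthogonal to all e_{n₁,n₂}. -/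
open MeasureTheory Complex
open scoped ComplexConjugate Real

/- Take f(k, q) = exp(2πi q / α), a character of period α in q alone. The pairing with
e_{n₁,n₂} factors into an integral in k times ∫₀^α exp(2πi (1 - L n₂) q / α) dq, and the
relation α² = 2πL makes the frequency of the latter an integer multiple 1 - L n₂ of 2π/α.
That multiple cannot vanish since L ≠ 1, so the q-integral is over full periods of a
nonconstant character and is zero. -/

lemma integral_Ico_exp_int_mul_eq_zero {a : ℝ} (ha : 0 < a) {m : ℤ} (hm : m ≠ 0) :
    ∫ x in Set.Ico 0 a, exp (2 * π * m / a * I * x) = 0 := by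
  have hc : (2 * π * m / a * I : ℂ) ≠ 0 := by
    have : (a : ℂ) ≠ 0 := by exact_mod_cast ha.ne'
    simp [hm, Real.pi_ne_zero, I_ne_zero, this]
  have hperiod : exp (2 * π * m / a * I * a) = 1 := by
    rw [mul_right_comm, div_mul_cancel₀ _ (by exact_mod_cast ha.ne'),
      ← exp_int_mul_two_pi_mul_I m]
    ring_nf
  rw [integral_Ico_eq_integral_Ioo, ← integral_Ioc_eq_integral_Ioo,
    ← intervalIntegral.integral_of_le ha.le, integral_exp_mul_complex hc, hperiod]
  simp

lemma memLp_exp_ofReal_mul_I {X : Type*} [MeasurableSpace X] {μ : Measure X}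
    [IsFiniteMeasure μ] {φ : X → ℝ} (hφ : Measurable φ) (p : ENNReal) :
    MemLp (fun x => exp (φ x * I)) p μ :=
  MemLp.of_bound (by fun_prop) 1 (.of_forall fun x => (norm_exp_ofReal_mul_I _).le)

lemma not_ae_eq_zero_of_forall_ne_zero {X E : Type*} [MeasurableSpace X] [Zero E]
    {μ : Measure X} (hμ : μ ≠ 0) {f : X → E} (hf : ∀ x, f x ≠ 0) : ¬ f =ᵐ[μ] 0 := by
  have := ae_neBot.2 hμ
  intro h
  obtain ⟨x, hx⟩ := h.exists
  exact hf x hx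

lemma one_sub_natCast_mul_ne_zero {L : ℕ} (hL : L ≠ 1) (n : ℤ) : 1 - (L : ℤ) * n ≠ 0 := by
  intro h
  have := Int.eq_one_or_neg_one_of_mul_eq_one (show (L : ℤ) * n = 1 by linarith)
  omega

theorem stmt16 (α : ℝ) (hα : 0 < α) (L : ℕ) (hL : 2 ≤ L)
    (hα2 : α ^ 2 = 2 * Real.pi * L)
    (e : ℤ → ℤ → (ℝ × ℝ) → ℂ)
    (he : ∀ n₁ n₂ : ℤ, ∀ x : ℝ × ℝ,
      e n₁ n₂ x =
        Complex.exp (Complex.I * (α : ℂ) * ((x.2 : ℂ) * (n₂ : ℂ) - (x.1 : ℂ) * (n₁ : ℂ))))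
    (μ : Measure (ℝ × ℝ))
    (hμ : μ = volume.restrict (Set.Ico (0 : ℝ) α ×ˢ Set.Ico (0 : ℝ) α)) :
    ∃ f : (ℝ × ℝ) → ℂ, MemLp f 2 μ ∧ ¬ (f =ᵐ[μ] 0) ∧
      ∀ n₁ n₂ : ℤ, ∫ x, conj (e n₁ n₂ x) * f x ∂μ = 0 := by
  have hμ_prod : μ = (volume.restrict (Set.Ico 0 α)).prod (volume.restrict (Set.Ico 0 α)) := by
    rw [hμ, Measure.volume_eq_prod, Measure.prod_restrict]
  have hμ_ne_zero : μ ≠ 0 := by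
    rw [hμ, Ne, Measure.restrict_eq_zero, Measure.volume_eq_prod, Measure.prod_prod,
      Real.volume_Ico]
    simp [hα]
  refine ⟨fun x => exp ((2 * π / α * x.2 : ℝ) * I), ?_,
    not_ae_eq_zero_of_forall_ne_zero hμ_ne_zero fun _ => exp_ne_zero _, fun n₁ n₂ => ?_⟩
  · rw [hμ_prod]
    exact memLp_exp_ofReal_mul_I (by fun_prop) 2
  have hfreq : 2 * π * ((1 - L * n₂ : ℤ) : ℂ) / α = 2 * π / α - α * n₂ := by
    have hα_ne : (α : ℂ) ≠ 0 := by exact_mod_cast hα.ne'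
    have hα2' : (α : ℂ) ^ 2 = 2 * π * L := by exact_mod_cast hα2
    push_cast
    field_simp
    linear_combination (n₂ : ℂ) * hα2'
  have hsplit : ∀ x : ℝ × ℝ, conj (e n₁ n₂ x) * exp ((2 * π / α * x.2 : ℝ) * I) =
      exp (α * n₁ * I * x.1) * exp (2 * π * (1 - L * n₂ : ℤ) / α * I * x.2) := by
    intro x
    rw [he, ← exp_conj, ← exp_add, ← exp_add, hfreq]
    congr 1
    simp only [map_mul, map_sub, conj_I, conj_ofReal, map_intCast]
    push_cast
    ring
  simp_rw [hsplit, hμ_prod]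
  rw [integral_prod_mul (f := fun k : ℝ => exp (α * n₁ * I * k))
      (g := fun q : ℝ => exp (2 * π * (1 - L * n₂ : ℤ) / α * I * q)),
    integral_Ico_exp_int_mul_eq_zero hα (one_sub_natCast_mul_ne_zero (by omega) n₂), mul_zero]
end
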